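/- arXiv:1412.5012 — 4 statements merged into one kernel-verified Lean document; each statement's English description precedes it below -/
import Mathlib

section
/- For a polynomial F in F_q[X_1,...,X_m], points P, V in F_q^m, any α in F_q, and any integer i ≥ 0, the i-th Hasse derivative of the univariate polynomial F|_{P,V}(T) = F(P + T·V) evaluated at α equals Σ_{|j|=i} H_j(F)(P + α·V) · V^j. -/
/-- The `i`-th Hasse derivative of a multivariate polynomial `F`: the coefficient of `Z^i`
in `F(X + Z)`. -/
noncomputable def mvHasseDeriv {K : Type*} [CommRing K] {m : ℕ} (i : Fin m →₀ ℕ)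
    (F : MvPolynomial (Fin m) K) : MvPolynomial (Fin m) K :=
  MvPolynomial.coeff i
    (MvPolynomial.eval₂ (MvPolynomial.C.comp MvPolynomial.C)
      (fun j => MvPolynomial.C (MvPolynomial.X j) + MvPolynomial.X j) F)

/-- The restriction of `F` to the line through `P` with direction `V`: `F(P + T·V)`. -/
noncomputable def lineRestrict {K : Type*} [CommRing K] {m : ℕ}
    (F : MvPolynomial (Fin m) K) (P V : Fin m → K) : Polynomial K :=
  MvPolynomial.eval₂ Polynomial.C
    (fun j => Polynomial.C (P j) + Polynomial.X * Polynomial.C (V j)) F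

/-- `H_i(F|_{P,V})(α) = Σ_{|j|=i} H_j(F)(P + α·V) · V^j`. -/
theorem hasseDeriv_lineRestrict_eval {K : Type*} [Field K] [Fintype K] {m : ℕ} (hm : 1 ≤ m)
    (F : MvPolynomial (Fin m) K) (P V : Fin m → K) (α : K) (i : ℕ) :
    (Polynomial.hasseDeriv i (lineRestrict F P V)).eval α =
      ∑ᶠ j ∈ {j : Fin m →₀ ℕ | (j.sum fun _ n => n) = i},
        MvPolynomial.eval (P + α • V) (mvHasseDeriv j F) * ∏ t, V t ^ j t := by
  classical
  set Q : Fin m → K := P + α • V with hQ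
  set G : MvPolynomial (Fin m) (MvPolynomial (Fin m) K) :=
    MvPolynomial.eval₂ (MvPolynomial.C.comp MvPolynomial.C)
      (fun t => MvPolynomial.C (MvPolynomial.X t) + MvPolynomial.X t) F with hG
  have hHD : ∀ j : Fin m →₀ ℕ, mvHasseDeriv j F = MvPolynomial.coeff j G := fun j => rfl
  -- Step 1: Taylor expansion identifies the LHS as a coefficient
  have h1 : (Polynomial.hasseDeriv i (lineRestrict F P V)).eval α
      = Polynomial.coeff (MvPolynomial.eval₂ Polynomial.C
          (fun t => Polynomial.C (Q t) + Polynomial.X * Polynomial.C (V t)) F) i := by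
    rw [← Polynomial.taylor_coeff]
    congr 1
    have key : (Polynomial.taylor α) (lineRestrict F P V)
        = (Polynomial.eval₂RingHom Polynomial.C (Polynomial.X + Polynomial.C α))
            (lineRestrict F P V) := by
      simp [Polynomial.taylor_apply, Polynomial.comp]
    rw [key]
    unfold lineRestrict
    rw [MvPolynomial.eval₂_comp_left]
    congr 1
    · ext a
      simp
    · funext t
      simp only [Function.comp_apply, Polynomial.coe_eval₂RingHom, Polynomial.eval₂_add,
        Polynomial.eval₂_mul, Polynomial.eval₂_C, Polynomial.eval₂_X, hQ, Pi.add_apply,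
        Pi.smul_apply, smul_eq_mul, Polynomial.C_add, Polynomial.C_mul]
      ring
  -- Step 2: factor through G
  have h2 : MvPolynomial.eval₂ Polynomial.C
        (fun t => Polynomial.C (Q t) + Polynomial.X * Polynomial.C (V t)) F
      = MvPolynomial.eval₂ (Polynomial.C.comp (MvPolynomial.eval Q))
          (fun t => Polynomial.X * Polynomial.C (V t)) G := by
    rw [hG]
    have := MvPolynomial.eval₂_comp_left
      (MvPolynomial.eval₂Hom (Polynomial.C.comp (MvPolynomial.eval Q))
        (fun t => Polynomial.X * Polynomial.C (V t)))
      (MvPolynomial.C.comp MvPolynomial.C)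
      (fun t => MvPolynomial.C (MvPolynomial.X t) + MvPolynomial.X t) F
    simp only [MvPolynomial.coe_eval₂Hom] at this
    rw [this]
    congr 1
    · ext a
      simp
    · funext t
      simp [add_comm]
  -- Step 3: compute the coefficient
  have h3 : ∀ j : Fin m →₀ ℕ,
      (∏ t, (Polynomial.X * Polynomial.C (V t)) ^ j t)
        = Polynomial.X ^ (j.sum fun _ n => n) * Polynomial.C (∏ t, V t ^ j t) := by
    intro j
    have hs : (j.sum fun _ n => n) = ∑ t, j t := Finsupp.sum_fintype _ _ (fun _ => rfl)
    simp only [mul_pow, Finset.prod_mul_distrib, ← Polynomial.C_pow, hs,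
      Finset.prod_pow_eq_pow_sum, ← map_prod]
  rw [h1, h2, MvPolynomial.eval₂_eq', Polynomial.finset_sum_coeff]
  have h4 : ∀ j : Fin m →₀ ℕ,
      (Polynomial.C (MvPolynomial.eval Q (MvPolynomial.coeff j G)) *
        ∏ t, (Polynomial.X * Polynomial.C (V t)) ^ j t).coeff i
      = if (j.sum fun _ n => n) = i then
          MvPolynomial.eval Q (MvPolynomial.coeff j G) * ∏ t, V t ^ j t else 0 := by
    intro j
    rw [h3 j, show Polynomial.C (MvPolynomial.eval Q (MvPolynomial.coeff j G)) *
        (Polynomial.X ^ (j.sum fun _ n => n) * Polynomial.C (∏ t, V t ^ j t))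
      = Polynomial.C (MvPolynomial.eval Q (MvPolynomial.coeff j G) * ∏ t, V t ^ j t) *
          Polynomial.X ^ (j.sum fun _ n => n) by rw [map_mul]; ring]
    rw [Polynomial.coeff_C_mul, Polynomial.coeff_X_pow]
    by_cases h : (j.sum fun _ n => n) = i
    · simp [h]
    · simp [h, Ne.symm h]
  simp only [RingHom.coe_comp, Function.comp_apply] at h4 ⊢
  rw [Finset.sum_congr rfl (fun j _ => h4 j), ← Finset.sum_filter]
  symm
  simp only [hHD]
  apply finsum_mem_eq_sum_of_inter_support_eq
  ext j
  simp only [Set.mem_inter_iff, Set.mem_setOf_eq, Function.mem_support, Finset.coe_filter,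
    MvPolynomial.mem_support_iff]
  constructor
  · rintro ⟨hji, hne⟩
    refine ⟨⟨?_, hji⟩, hne⟩
    intro h0
    exact hne (by simp [h0])
  · rintro ⟨⟨_, hji⟩, hne⟩
    exact ⟨hji, hne⟩
end

section
/- (Schwartz–Zippel with multiplicities) Let F be a nonzero polynomial in F_q[X_1,...,X_m] of total degree at most d. Then Σ_{P ∈ F_q^m} mult(F, P) ≤ d·q^{m-1}, where mult(F,P) is the multiplicity of F at P, i.e., the largest integer M such that all Hasse derivatives H_i(F) of weight |i| < M vanish at P. -/
/-- The multiplicity of `F` at a point `P`: the largest `M` such that all Hasse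
derivatives of weight `< M` vanish at `P`. -/
noncomputable def mvMult {K : Type*} [CommRing K] {m : ℕ}
    (F : MvPolynomial (Fin m) K) (P : Fin m → K) : ℕ :=
  sSup {M : ℕ | ∀ i : Fin m →₀ ℕ, (i.sum fun _ n => n) < M →
    MvPolynomial.eval P (mvHasseDeriv i F) = 0}

open MvPolynomial

section mvTaylor
variable {σ R : Type*} [CommSemiring R]

noncomputable def mvTaylor (P : σ → R) : MvPolynomial σ R →ₐ[R] MvPolynomial σ R :=
  aeval fun j => X j + C (P j)

@[simp]
lemma mvTaylor_X (P : σ → R) (j : σ) : mvTaylor P (X j) = X j + C (P j) :=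
  aeval_X _ _

lemma mvTaylor_comp (P Q : σ → R) : (mvTaylor P).comp (mvTaylor Q) = mvTaylor (P + Q) := by
  ext j
  simp [add_assoc]

lemma mvTaylor_zero : mvTaylor (0 : σ → R) = AlgHom.id R _ := by
  ext j
  simp

end mvTaylor

lemma mvTaylor_injective {σ R : Type*} [CommRing R] (P : σ → R) :
    Function.Injective (mvTaylor P) := by
  refine Function.LeftInverse.injective (g := mvTaylor (-P)) fun F => ?_
  rw [← AlgHom.comp_apply, mvTaylor_comp, neg_add_cancel, mvTaylor_zero, AlgHom.id_apply]

namespace Polynomial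
variable {R S : Type*} [CommSemiring R] [Semiring S] [Algebra R S]

noncomputable def mapCoeffs (φ : S →ₗ[R] R) (p : S[X]) : R[X] :=
  p.sum fun k c => monomial k (φ c)

@[simp]
lemma coeff_mapCoeffs (φ : S →ₗ[R] R) (p : S[X]) (k : ℕ) :
    (p.mapCoeffs φ).coeff k = φ (p.coeff k) := by
  rw [mapCoeffs, Polynomial.sum_def, finsetSum_coeff]
  simp only [coeff_monomial]
  rw [Finset.sum_ite_eq']
  split_ifs with hk
  · rfl
  · rw [notMem_support_iff.1 hk, map_zero]

lemma natDegree_mapCoeffs_le (φ : S →ₗ[R] R) (p : S[X]) :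
    (p.mapCoeffs φ).natDegree ≤ p.natDegree :=
  natDegree_le_iff_coeff_eq_zero.2 fun k hk => by
    rw [coeff_mapCoeffs, coeff_eq_zero_of_natDegree_lt hk, map_zero]

lemma mapCoeffs_add (φ : S →ₗ[R] R) (p q : S[X]) :
    (p + q).mapCoeffs φ = p.mapCoeffs φ + q.mapCoeffs φ := by
  ext k; simp

lemma mapCoeffs_C_mul_map (φ : S →ₗ[R] R) (c : S) (q : R[X]) :
    (C c * q.map (algebraMap R S)).mapCoeffs φ = C (φ c) * q := by
  ext k
  rw [coeff_mapCoeffs, coeff_C_mul, coeff_map, coeff_C_mul, ← Algebra.commutes,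
    ← Algebra.smul_def, map_smul, smul_eq_mul, mul_comm]

lemma taylor_mapCoeffs (φ : S →ₗ[R] R) (r : R) (p : S[X]) :
    taylor r (p.mapCoeffs φ) = (taylor (algebraMap R S r) p).mapCoeffs φ := by
  induction p using Polynomial.induction_on' with
  | add p q hp hq => rw [mapCoeffs_add, map_add, map_add, mapCoeffs_add, hp, hq]
  | monomial k c =>
    have : (X + C (algebraMap R S r)) ^ k = ((X + C r) ^ k).map (algebraMap R S) := by simp
    rw [taylor_monomial, this, mapCoeffs_C_mul_map, ← taylor_monomial]
    congr 1
    ext j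
    simp [coeff_monomial, apply_ite φ]

end Polynomial

lemma Finsupp.degree_cons {n : ℕ} (k : ℕ) (i : Fin n →₀ ℕ) :
    (Finsupp.cons k i).degree = k + i.degree := by
  simp [Finsupp.degree_eq_sum, Fin.sum_univ_succ]

lemma eval_mvHasseDeriv {K : Type*} [CommRing K] {m : ℕ} (i : Fin m →₀ ℕ)
    (F : MvPolynomial (Fin m) K) (P : Fin m → K) :
    eval P (mvHasseDeriv i F) = coeff i (mvTaylor P F) := by
  have h : (MvPolynomial.map (eval P)).comp
      (eval₂Hom (C.comp C) fun j : Fin m => C (X j) + X j) = (mvTaylor P).toRingHom := by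
    ext <;> simp [add_comm]
  rw [mvHasseDeriv, ← coeff_map]
  exact congrArg (fun φ : _ →+* _ => coeff i (φ F)) h

section mvMult
variable {K : Type*} [CommRing K] {m : ℕ} {F : MvPolynomial (Fin m) K} {P : Fin m → K}

lemma mvMult_eq_sSup :
    mvMult F P = sSup {M | ∀ i : Fin m →₀ ℕ, i.degree < M → coeff i (mvTaylor P F) = 0} := by
  simp only [mvMult, eval_mvHasseDeriv]
  rfl

lemma bddAbove_vanishing_orders (hF : F ≠ 0) :
    BddAbove {M | ∀ i : Fin m →₀ ℕ, i.degree < M → coeff i (mvTaylor P F) = 0} := by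
  obtain ⟨i, hi⟩ := MvPolynomial.ne_zero_iff.1 ((map_ne_zero_iff _ (mvTaylor_injective P)).2 hF)
  exact ⟨i.degree, fun M hM => not_lt.1 fun hlt => hi (hM i hlt)⟩

lemma coeff_mvTaylor_eq_zero_of_degree_lt_mvMult {i : Fin m →₀ ℕ}
    (hi : i.degree < mvMult F P) : coeff i (mvTaylor P F) = 0 := by
  rcases eq_or_ne F 0 with rfl | hF
  · rw [map_zero, coeff_zero]
  rw [mvMult_eq_sSup] at hi
  exact Nat.sSup_mem ⟨0, fun _ h => absurd h (Nat.not_lt_zero _)⟩ (bddAbove_vanishing_orders hF)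
    i hi

lemma exists_degree_eq_mvMult_and_coeff_mvTaylor_ne_zero (hF : F ≠ 0) :
    ∃ i : Fin m →₀ ℕ, i.degree = mvMult F P ∧ coeff i (mvTaylor P F) ≠ 0 := by
  have hsucc : mvMult F P + 1 ∉
      {M | ∀ i : Fin m →₀ ℕ, i.degree < M → coeff i (mvTaylor P F) = 0} := fun h => by
    simpa [mvMult_eq_sSup] using le_csSup (bddAbove_vanishing_orders hF) h
  simp only [Set.mem_ofPred_eq, not_forall] at hsucc
  obtain ⟨i, hlt, hi⟩ := hsucc
  exact ⟨i, le_antisymm (Nat.lt_succ_iff.1 hlt)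
    (not_lt.1 fun h => hi (coeff_mvTaylor_eq_zero_of_degree_lt_mvMult h)), hi⟩

lemma mvMult_eq_zero_of_isEmpty [IsEmpty (Fin m)] (hF : F ≠ 0) : mvMult F P = 0 := by
  obtain ⟨i, hi, -⟩ := exists_degree_eq_mvMult_and_coeff_mvTaylor_ne_zero (P := P) hF
  rw [← hi, Subsingleton.elim i 0, map_zero]

end mvMult

lemma finSuccEquiv_mvTaylor_cons {K : Type*} [CommRing K] {n : ℕ} (b : K) (a : Fin n → K)
    (F : MvPolynomial (Fin (n + 1)) K) :
    finSuccEquiv K n (mvTaylor (Fin.cons b a) F) =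
      Polynomial.taylor (C b) ((finSuccEquiv K n F).map (mvTaylor a).toRingHom) := by
  have h : (finSuccEquiv K n).toAlgHom.comp (mvTaylor (Fin.cons b a)) =
      ((Polynomial.taylorAlgHom (C b : MvPolynomial (Fin n) K)).restrictScalars K).comp
        ((Polynomial.mapAlgHom (mvTaylor a)).comp (finSuccEquiv K n).toAlgHom) := by
    refine MvPolynomial.algHom_ext fun j => ?_
    cases j using Fin.cases <;> simp [finSuccEquiv_apply]
  exact congrArg (fun φ : _ →ₐ[K] _ => φ F) h

lemma Polynomial.sum_rootMultiplicity_le_natDegree {R : Type*} [CommRing R] [IsDomain R]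
    [Fintype R] (p : Polynomial R) : ∑ b, p.rootMultiplicity b ≤ p.natDegree := by
  classical
  calc ∑ b, p.rootMultiplicity b = ∑ b, p.roots.count b := by simp only [Polynomial.count_roots]
    _ = Multiset.card p.roots := Multiset.sum_count_eq_card fun b _ => Finset.mem_univ b
    _ ≤ p.natDegree := Polynomial.card_roots' p

lemma Fintype.sum_fin_succ_pi {α M : Type*} [Fintype α] [AddCommMonoid M] {n : ℕ}
    (f : (Fin (n + 1) → α) → M) : ∑ P, f P = ∑ a : Fin n → α, ∑ b, f (Fin.cons b a) := by
  rw [← (Fin.consEquiv fun _ => α).sum_comp, Fintype.sum_prod_type, Finset.sum_comm]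
  rfl

section slice
variable {K : Type*} [CommRing K] {n : ℕ}

/-- The coefficient of `Z^i` in `F(X₀, a + Z)`, as a polynomial in `X₀`. -/
noncomputable def sliceCoeff (F : MvPolynomial (Fin (n + 1)) K) (a : Fin n → K)
    (i : Fin n →₀ ℕ) : Polynomial K :=
  ((finSuccEquiv K n F).map (mvTaylor a).toRingHom).mapCoeffs (lcoeff K i)

lemma coeff_sliceCoeff (F : MvPolynomial (Fin (n + 1)) K) (a : Fin n → K) (i : Fin n →₀ ℕ)
    (k : ℕ) : (sliceCoeff F a i).coeff k = coeff i (mvTaylor a ((finSuccEquiv K n F).coeff k)) :=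
  by rw [sliceCoeff, Polynomial.coeff_mapCoeffs, Polynomial.coeff_map]; rfl

lemma natDegree_sliceCoeff_le (F : MvPolynomial (Fin (n + 1)) K) (a : Fin n → K)
    (i : Fin n →₀ ℕ) : (sliceCoeff F a i).natDegree ≤ (finSuccEquiv K n F).natDegree :=
  (Polynomial.natDegree_mapCoeffs_le _ _).trans Polynomial.natDegree_map_le

lemma coeff_taylor_sliceCoeff (F : MvPolynomial (Fin (n + 1)) K) (b : K) (a : Fin n → K)
    (i : Fin n →₀ ℕ) (k : ℕ) :
    (Polynomial.taylor b (sliceCoeff F a i)).coeff k =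
      coeff (Finsupp.cons k i) (mvTaylor (Fin.cons b a) F) := by
  rw [sliceCoeff, Polynomial.taylor_mapCoeffs, algebraMap_eq, ← finSuccEquiv_mvTaylor_cons,
    Polynomial.coeff_mapCoeffs, lcoeff_apply, finSuccEquiv_coeff_coeff]

lemma mvMult_cons_le_degree_add_rootMultiplicity (F : MvPolynomial (Fin (n + 1)) K)
    (b : K) (a : Fin n → K) (i : Fin n →₀ ℕ) (hh : sliceCoeff F a i ≠ 0) :
    mvMult F (Fin.cons b a) ≤ i.degree + (sliceCoeff F a i).rootMultiplicity b := by
  rw [Polynomial.rootMultiplicity_eq_natTrailingDegree, ← Polynomial.taylor_apply,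
    ← tsub_le_iff_left]
  refine Polynomial.le_natTrailingDegree ((Polynomial.taylor_eq_zero b _).not.2 hh) fun k hk => ?_
  rw [coeff_taylor_sliceCoeff]
  exact coeff_mvTaylor_eq_zero_of_degree_lt_mvMult (by rw [Finsupp.degree_cons]; omega)

variable [IsDomain K] [Fintype K]

lemma sum_mvMult_cons_le (F : MvPolynomial (Fin (n + 1)) K) (hF : F ≠ 0) (a : Fin n → K) :
    ∑ b, mvMult F (Fin.cons b a) ≤
      Fintype.card K * mvMult (finSuccEquiv K n F).leadingCoeff a +
        (finSuccEquiv K n F).natDegree := by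
  set f := finSuccEquiv K n F
  have hf : f ≠ 0 := (map_ne_zero_iff _ (finSuccEquiv K n).injective).2 hF
  obtain ⟨i, hi, hci⟩ := exists_degree_eq_mvMult_and_coeff_mvTaylor_ne_zero (P := a)
    (Polynomial.leadingCoeff_ne_zero.2 hf)
  set h := sliceCoeff F a i
  have hh : h ≠ 0 := fun h0 => hci <| by
    rw [← Polynomial.coeff_natDegree, ← coeff_sliceCoeff]
    change h.coeff _ = 0
    rw [h0, Polynomial.coeff_zero]
  calc ∑ b, mvMult F (Fin.cons b a) ≤ ∑ b, (i.degree + h.rootMultiplicity b) :=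
        Finset.sum_le_sum fun b _ => mvMult_cons_le_degree_add_rootMultiplicity F b a i hh
    _ = Fintype.card K * i.degree + ∑ b, h.rootMultiplicity b := by
        rw [Finset.sum_add_distrib, Finset.sum_const, Finset.card_univ, smul_eq_mul]
    _ ≤ Fintype.card K * i.degree + f.natDegree := by
        gcongr
        exact h.sum_rootMultiplicity_le_natDegree.trans (natDegree_sliceCoeff_le F a i)
    _ = _ := by rw [hi]

end slice

theorem card_mul_sum_mvMult_le {K : Type*} [CommRing K] [IsDomain K] [Fintype K] {n : ℕ}
    (F : MvPolynomial (Fin n) K) (hF : F ≠ 0) :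
    Fintype.card K * ∑ P, mvMult F P ≤ F.totalDegree * Fintype.card K ^ n := by
  induction n with
  | zero => simp [mvMult_eq_zero_of_isEmpty hF]
  | succ n ih =>
    set q := Fintype.card K
    set f := finSuccEquiv K n F
    have hf : f ≠ 0 := (map_ne_zero_iff _ (finSuccEquiv K n).injective).2 hF
    have hdeg : f.leadingCoeff.totalDegree + f.natDegree ≤ F.totalDegree :=
      totalDegree_coeff_finSuccEquiv_add_le F f.natDegree (Polynomial.leadingCoeff_ne_zero.2 hf)
    calc q * ∑ P, mvMult F P = q * ∑ a : Fin n → K, ∑ b, mvMult F (Fin.cons b a) := by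
          rw [Fintype.sum_fin_succ_pi]
      _ ≤ q * ∑ a : Fin n → K, (q * mvMult f.leadingCoeff a + f.natDegree) := by
          gcongr with a
          exact sum_mvMult_cons_le F hF a
      _ = q * (q * ∑ a, mvMult f.leadingCoeff a) + f.natDegree * q ^ (n + 1) := by
          rw [Finset.sum_add_distrib, ← Finset.mul_sum, Finset.sum_const, Finset.card_univ,
            Fintype.card_fun, Fintype.card_fin, smul_eq_mul]
          ring
      _ ≤ q * (f.leadingCoeff.totalDegree * q ^ n) + f.natDegree * q ^ (n + 1) := by
          gcongr q * ?_ + _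
          exact ih _ (Polynomial.leadingCoeff_ne_zero.2 hf)
      _ = (f.leadingCoeff.totalDegree + f.natDegree) * q ^ (n + 1) := by ring
      _ ≤ F.totalDegree * q ^ (n + 1) := by gcongr

open Finset in
theorem schwartz_zippel_mult_general {Fq : Type*} [Field Fq] [Fintype Fq] {m d : ℕ}
    (F : MvPolynomial (Fin m) Fq) (hF : F ≠ 0) (hdeg : F.totalDegree ≤ d) :
    ∑ P : Fin m → Fq, mvMult F P ≤ d * Fintype.card Fq ^ (m - 1) := by
  have hq : 0 < Fintype.card Fq := Fintype.card_pos
  refine Nat.le_of_mul_le_mul_left ?_ hq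
  calc Fintype.card Fq * ∑ P, mvMult F P ≤ F.totalDegree * Fintype.card Fq ^ m :=
        card_mul_sum_mvMult_le F hF
    _ ≤ d * Fintype.card Fq ^ (m - 1 + 1) :=
        Nat.mul_le_mul hdeg (Nat.pow_le_pow_right hq (by omega))
    _ = Fintype.card Fq * (d * Fintype.card Fq ^ (m - 1)) := by ring

open Finset in
/-- Schwartz–Zippel with multiplicities: for nonzero `F` of total degree
at most `d`, `Σ_{P ∈ F_q^m} mult(F,P) ≤ d·q^{m-1}`. -/
theorem schwartz_zippel_mult {Fq : Type*} [Field Fq] [Fintype Fq] {m d : ℕ} (hm : 1 ≤ m)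
    (F : MvPolynomial (Fin m) Fq) (hF : F ≠ 0) (hdeg : F.totalDegree ≤ d) :
    ∑ P : Fin m → Fq, mvMult F P ≤ d * Fintype.card Fq ^ (m - 1) :=
  schwartz_zippel_mult_general F hF hdeg
end

section
/- Let q be a prime power and s ≥ 1, d integers with d < s(q-1). If F, G are univariate polynomials in F_q[X] of degree at most d such that the i-th Hasse derivatives of F and G agree at every nonzero point of F_q for all 0 ≤ i < s, then F = G. -/
open Polynomial

/-- for `d < s(q-1)`, univariate polynomials of degree at most `d` whose
Hasse derivatives of order `< s` agree at every nonzero point of `F_q` are equal. -/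
theorem univariate_evs_injective {Fq : Type*} [Field Fq] [Fintype Fq] {s d : ℕ}
    (hs : 1 ≤ s) (hd : d < s * (Fintype.card Fq - 1))
    (F G : Polynomial Fq) (hF : F.natDegree ≤ d) (hG : G.natDegree ≤ d)
    (h : ∀ α : Fq, α ≠ 0 → ∀ i : ℕ, i < s →
      (Polynomial.hasseDeriv i F).eval α = (Polynomial.hasseDeriv i G).eval α) :
    F = G := by
  classical
  by_contra hne
  set P : Polynomial Fq := F - G with hPdef
  have hP : P ≠ 0 := sub_ne_zero.mpr hne
  have hPd : P.natDegree ≤ d := le_trans (natDegree_sub_le F G) (max_le hF hG)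
  have hdvd : ∀ α : Fq, α ≠ 0 → (X - C α) ^ s ∣ P := by
    intro α hα
    have hX : X ^ s ∣ taylor α P := by
      rw [X_pow_dvd_iff]
      intro i hi
      rw [taylor_coeff, map_sub, eval_sub, h α hα i hi, sub_self]
    obtain ⟨R, hR⟩ := hX
    refine ⟨R.comp (X - C α), ?_⟩
    have hPcomp : (taylor α P).comp (X - C α) = P := by
      rw [taylor_apply, comp_assoc]
      simp
    calc P = (taylor α P).comp (X - C α) := hPcomp.symm
      _ = (X ^ s * R).comp (X - C α) := by rw [hR]
      _ = (X - C α) ^ s * R.comp (X - C α) := by rw [mul_comp, pow_comp, X_comp]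
  set T : Finset Fq := Finset.univ.erase 0 with hT
  have hprod : (∏ a ∈ T, (X - C a) ^ s) ∣ P := by
    apply Finset.prod_dvd_of_coprime
    · intro a ha b hb hab
      exact (isCoprime_X_sub_C_of_isUnit_sub (IsUnit.mk0 _ (sub_ne_zero.mpr hab))).pow
    · intro a ha
      exact hdvd a (Finset.ne_of_mem_erase ha)
  have hdeg := Polynomial.natDegree_le_of_dvd hprod hP
  have hdeg2 : (∏ a ∈ T, (X - C a) ^ s).natDegree = s * (Fintype.card Fq - 1) := by
    rw [natDegree_prod]
    · have hcard : T.card = Fintype.card Fq - 1 := by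
        rw [hT, Finset.card_erase_of_mem (Finset.mem_univ 0), Finset.card_univ]
      simp only [natDegree_pow, natDegree_X_sub_C, mul_one, Finset.sum_const, smul_eq_mul,
        hcard, mul_comm]
    · intro a ha
      exact pow_ne_zero _ (X_sub_C_ne_zero a)
  omega
end

section
/- Existence of the Berlekamp–Welch pair: with n = q−1, s ≥ 1, 0 ≤ d < sn, and any y ∈ (F_q^s)^n indexed by α_1,...,α_n ∈ F_q^*, there exists a nonzero pair (N, E) of polynomials with deg N ≤ (sn+d)/2 and deg E ≤ (sn−d)/2 satisfying, for every i ∈ {1,...,n} and every 0 ≤ e < s, the linear equation H_e(N)(α_i) = Σ_{j=0}^{e} H_j(E)(α_i)·y_{i,e-j}. -/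
/-!
The key equations are `s n` homogeneous linear conditions on the pair `(N, E)`, while the
polynomials with `deg N ≤ ⌊(sn+d)/2⌋` and `deg E ≤ ⌊(sn-d)/2⌋` form a space of dimension at
least `sn + 1`; so the linear map sending `(N, E)` to the defects of the key equations has a
nonzero kernel.
-/

open Module

namespace Polynomial

variable {K : Type*} [Field K]

theorem finrank_degreeLT (n : ℕ) : finrank K (degreeLT K n) = n := by
  rw [(degreeLTEquiv K n).finrank_eq, finrank_fin_fun]

theorem natDegree_le_of_mem_degreeLT_succ {R : Type*} [Semiring R] {p : R[X]} {n : ℕ}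
    (hp : p ∈ degreeLT R (n + 1)) :
    p.natDegree ≤ n := by
  rw [degreeLT_succ_eq_degreeLE, mem_degreeLE] at hp
  exact natDegree_le_iff_degree_le.2 hp

theorem exists_ne_zero_natDegree_le_map_eq_zero {W : Type*} [AddCommGroup W] [Module K W]
    [FiniteDimensional K W] (L : K[X] × K[X] →ₗ[K] W) {a b : ℕ}
    (h : finrank K W < a + b + 2) :
    ∃ N E : K[X], (N, E) ≠ 0 ∧ N.natDegree ≤ a ∧ E.natDegree ≤ b ∧ L (N, E) = 0 := by
  let L' := L ∘ₗ ((degreeLT K (a + 1)).subtype.prodMap (degreeLT K (b + 1)).subtype)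
  have hdim : finrank K W < finrank K (degreeLT K (a + 1) × degreeLT K (b + 1)) := by
    rw [finrank_prod, finrank_degreeLT, finrank_degreeLT]
    omega
  obtain ⟨⟨N, E⟩, hker, hne⟩ :=
    Submodule.exists_mem_ne_zero_of_ne_bot (LinearMap.ker_ne_bot_of_finrank_lt (f := L') hdim)
  refine ⟨N, E, ?_, natDegree_le_of_mem_degreeLT_succ N.2,
    natDegree_le_of_mem_degreeLT_succ E.2, hker⟩
  simpa [Prod.ext_iff] using hne

end Polynomial

open Polynomial

noncomputable def keyEquationDefect {K ι : Type*} [Field K] {s : ℕ}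
    (α : ι → K) (y : ι → Fin s → K) :
    K[X] × K[X] →ₗ[K] (ι → Fin s → K) where
  toFun p i e := (hasseDeriv e p.1).eval (α i) -
    ∑ j : Fin (e + 1), (hasseDeriv j p.2).eval (α i) *
      y i ⟨e - j, lt_of_le_of_lt (Nat.sub_le e j) e.2⟩
  map_add' p q := by
    funext i e
    simp only [Prod.fst_add, Prod.snd_add, map_add, eval_add, add_mul, Finset.sum_add_distrib,
      Pi.add_apply]
    ring
  map_smul' c p := by
    funext i e
    simp only [Prod.smul_fst, Prod.smul_snd, map_smul, eval_smul, smul_eq_mul, Finset.mul_sum,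
      mul_sub, mul_assoc, Pi.smul_apply, RingHom.id_apply]

theorem berlekamp_welch_exists_general {Fq : Type*} [Field Fq] {s d n : ℕ}
    (hd : d < s * n)
    (α : Fin n → Fq)
    (y : Fin n → Fin s → Fq) :
    ∃ N E : Polynomial Fq, ¬(N = 0 ∧ E = 0) ∧
      (N.natDegree : ℚ) ≤ ((s * n + d : ℕ) : ℚ) / 2 ∧
      (E.natDegree : ℚ) ≤ ((s * n : ℕ) - (d : ℚ)) / 2 ∧
      ∀ (i : Fin n) (e : ℕ) (he : e < s),
        (Polynomial.hasseDeriv e N).eval (α i) =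
          ∑ j : Fin (e + 1), (Polynomial.hasseDeriv j E).eval (α i) *
            y i ⟨e - j, lt_of_le_of_lt (Nat.sub_le e j) he⟩ := by
  have hdim : finrank Fq (Fin n → Fin s → Fq) < (s * n + d) / 2 + (s * n - d) / 2 + 2 := by
    rw [finrank_pi_fintype]
    simp only [finrank_fin_fun, Finset.sum_const, Finset.card_univ, Fintype.card_fin,
      smul_eq_mul]
    rw [Nat.mul_comm]
    omega
  obtain ⟨N, E, hNE, hN, hE, hkey⟩ :=
    exists_ne_zero_natDegree_le_map_eq_zero (keyEquationDefect α y) hdim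
  refine ⟨N, E, by simpa using hNE, ?_, ?_, fun i e he => ?_⟩
  · exact (Nat.cast_le.2 hN).trans Nat.cast_div_le
  · rw [← Nat.cast_sub hd.le]
    exact (Nat.cast_le.2 hE).trans Nat.cast_div_le
  · exact sub_eq_zero.1 (congrFun (congrFun hkey i) ⟨e, he⟩)

/-- existence of the Berlekamp–Welch pair: for `n = q−1`, `s ≥ 1`,
`0 ≤ d < sn`, and any `y ∈ (F_q^s)^n`, there is a nonzero pair `(N, E)` with
`deg N ≤ (sn+d)/2` and `deg E ≤ (sn−d)/2` satisfying all the key equations. -/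
theorem berlekamp_welch_exists {Fq : Type*} [Field Fq] [Fintype Fq] {s d n : ℕ}
    (hs : 1 ≤ s) (hn : n = Fintype.card Fq - 1) (hd : d < s * n)
    (α : Fin n → Fq) (hαinj : Function.Injective α) (hα0 : ∀ i, α i ≠ 0)
    (y : Fin n → Fin s → Fq) :
    ∃ N E : Polynomial Fq, ¬(N = 0 ∧ E = 0) ∧
      (N.natDegree : ℚ) ≤ ((s * n + d : ℕ) : ℚ) / 2 ∧
      (E.natDegree : ℚ) ≤ ((s * n : ℕ) - (d : ℚ)) / 2 ∧
      ∀ (i : Fin n) (e : ℕ) (he : e < s),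
        (Polynomial.hasseDeriv e N).eval (α i) =
          ∑ j : Fin (e + 1), (Polynomial.hasseDeriv j E).eval (α i) *
            y i ⟨e - j, lt_of_le_of_lt (Nat.sub_le e j) he⟩ :=
  berlekamp_welch_exists_general hd α y
end
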